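/- arXiv:math/9604229 — 4 statements merged into one kernel-verified Lean document; each statement's English description precedes it below -/
import Mathlib

section
/- Let a_1, ..., a_n be positive real numbers and let 0 ≤ λ ≤ 1. Define a_j(λ) = 1 + λ(a_j - 1) and A_n(λ) = ∏_{j=1}^n a_j(λ). Then A_n(λ) ≥ min{1, A_n(1)}, i.e., ∏_{j=1}^n (1 + λ(a_j - 1)) ≥ min{1, ∏_{j=1}^n a_j}. -/
/-! Bernoulli's inequality `a ^ λ ≤ 1 + λ (a - 1)` for `λ ∈ [0, 1]`, applied factor by factor,
gives `A_n(λ) ≥ A_n(1) ^ λ`; and `x ^ λ` lies above `min 1 x` for `x ≥ 0`, since it lies between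
`x ^ 1` and `x ^ 0`. -/

namespace Real

theorem rpow_le_one_add_mul_sub_one {a p : ℝ} (ha : 0 ≤ a) (hp0 : 0 ≤ p) (hp1 : p ≤ 1) :
    a ^ p ≤ 1 + p * (a - 1) := by
  simpa using rpow_one_add_le_one_add_mul_self (s := a - 1) (by linarith) hp0 hp1

theorem min_one_le_rpow {x p : ℝ} (hx : 0 ≤ x) (hp0 : 0 ≤ p) (hp1 : p ≤ 1) :
    min 1 x ≤ x ^ p := by
  rcases le_total 1 x with h | h
  · exact (min_le_left 1 x).trans (one_le_rpow h hp0)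
  · exact (min_le_right 1 x).trans (self_le_rpow_of_le_one hx h hp1)

theorem finset_prod_rpow_le_prod_one_add_mul_sub_one {ι : Type*} (s : Finset ι) {a : ι → ℝ}
    (ha : ∀ i ∈ s, 0 ≤ a i) {p : ℝ} (hp0 : 0 ≤ p) (hp1 : p ≤ 1) :
    (∏ i ∈ s, a i) ^ p ≤ ∏ i ∈ s, (1 + p * (a i - 1)) := by
  rw [← finsetProd_rpow s a ha]
  exact Finset.prod_le_prod (fun i hi => rpow_nonneg (ha i hi) p)
    fun i hi => rpow_le_one_add_mul_sub_one (ha i hi) hp0 hp1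

end Real

theorem stmt_0 (n : ℕ) (a : Fin n → ℝ) (ha : ∀ j, 0 < a j)
    (lam : ℝ) (h0 : 0 ≤ lam) (h1 : lam ≤ 1) :
    ∏ j, (1 + lam * (a j - 1)) ≥ min 1 (∏ j, a j) :=
  calc min 1 (∏ j, a j)
      ≤ (∏ j, a j) ^ lam :=
        Real.min_one_le_rpow (Finset.prod_nonneg fun j _ => (ha j).le) h0 h1
    _ ≤ ∏ j, (1 + lam * (a j - 1)) :=
        Real.finset_prod_rpow_le_prod_one_add_mul_sub_one _ (fun j _ => (ha j).le) h0 h1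
end

section
/- Let a_1, ..., a_n be positive real numbers and let 0 ≤ λ ≤ 1. Then ∏_{j=1}^n ((1-λ) + λ a_j) ≥ (λ (∏_{j=1}^n a_j)^{1/n} + (1-λ))^n. -/
/-!
Dividing by `x i + y i` and applying AM–GM to the ratios `x i / (x i + y i)` and
`y i / (x i + y i)`, whose arithmetic means add up to `1`, shows that the geometric mean is
superadditive on nonnegative vectors (Mahler's inequality). The theorem is the instance
`x i = 1 - λ`, `y i = λ a i`, raised to the `n`-th power.
-/

open Finset Real

namespace Real

variable {ι : Type*} {s : Finset ι}

theorem sum_inv_card_eq_one (hs : s.Nonempty) : ∑ _i ∈ s, (#s : ℝ)⁻¹ = 1 := by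
  rw [sum_const, nsmul_eq_mul, mul_inv_cancel₀ (by exact_mod_cast hs.card_pos.ne')]

theorem geom_mean_div_le_arith_mean (hs : s.Nonempty) {x z : ι → ℝ}
    (hx : ∀ i ∈ s, 0 ≤ x i) (hz : ∀ i ∈ s, 0 < z i) :
    (∏ i ∈ s, x i) ^ (#s : ℝ)⁻¹ / (∏ i ∈ s, z i) ^ (#s : ℝ)⁻¹ ≤
      ∑ i ∈ s, (#s : ℝ)⁻¹ * (x i / z i) := by
  have hxz : ∀ i ∈ s, 0 ≤ x i / z i := fun i hi => div_nonneg (hx i hi) (hz i hi).le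
  calc (∏ i ∈ s, x i) ^ (#s : ℝ)⁻¹ / (∏ i ∈ s, z i) ^ (#s : ℝ)⁻¹
      = ∏ i ∈ s, (x i / z i) ^ (#s : ℝ)⁻¹ := by
        rw [← div_rpow (prod_nonneg hx) (prod_nonneg fun i hi => (hz i hi).le),
          ← prod_div_distrib, finsetProd_rpow _ _ hxz]
    _ ≤ ∑ i ∈ s, (#s : ℝ)⁻¹ * (x i / z i) :=
        geom_mean_le_arith_mean_weighted s _ _ (fun _ _ => by positivity)
          (sum_inv_card_eq_one hs) hxz

theorem geom_mean_add_le_geom_mean_add (hs : s.Nonempty) {x y : ι → ℝ}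
    (hx : ∀ i ∈ s, 0 ≤ x i) (hy : ∀ i ∈ s, 0 ≤ y i) :
    (∏ i ∈ s, x i) ^ (#s : ℝ)⁻¹ + (∏ i ∈ s, y i) ^ (#s : ℝ)⁻¹ ≤
      (∏ i ∈ s, (x i + y i)) ^ (#s : ℝ)⁻¹ := by
  have hxy : ∀ i ∈ s, 0 ≤ x i + y i := fun i hi => add_nonneg (hx i hi) (hy i hi)
  by_cases hzero : ∃ i ∈ s, x i + y i = 0
  · obtain ⟨i, hi, hi0⟩ := hzero
    have hxi : x i = 0 := by linarith [hx i hi, hy i hi]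
    have hyi : y i = 0 := by linarith [hx i hi, hy i hi]
    have hw : (#s : ℝ)⁻¹ ≠ 0 := by simpa using hs.card_pos.ne'
    rw [prod_eq_zero hi hxi, prod_eq_zero hi hyi, zero_rpow hw, zero_add]
    exact rpow_nonneg (prod_nonneg hxy) _
  push Not at hzero
  have hpos : ∀ i ∈ s, 0 < x i + y i := fun i hi => (hxy i hi).lt_of_ne' (hzero i hi)
  have hS : 0 < (∏ i ∈ s, (x i + y i)) ^ (#s : ℝ)⁻¹ := rpow_pos_of_pos (prod_pos hpos) _
  have hsum : ∑ i ∈ s, (#s : ℝ)⁻¹ * (x i / (x i + y i)) +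
      ∑ i ∈ s, (#s : ℝ)⁻¹ * (y i / (x i + y i)) = 1 := by
    rw [← sum_add_distrib, ← sum_inv_card_eq_one hs]
    refine sum_congr rfl fun i hi => ?_
    rw [← mul_add, ← add_div, div_self (hzero i hi), mul_one]
  rw [← div_le_one hS, add_div]
  linarith [geom_mean_div_le_arith_mean hs hx hpos, geom_mean_div_le_arith_mean hs hy hpos]

end Real

theorem stmt_1 (n : ℕ) (hn : 0 < n) (a : Fin n → ℝ) (ha : ∀ j, 0 < a j)
    (lam : ℝ) (h0 : 0 ≤ lam) (h1 : lam ≤ 1) :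
    ∏ j, ((1 - lam) + lam * a j) ≥
      (lam * (∏ j, a j) ^ ((1 : ℝ) / n) + (1 - lam)) ^ n := by
  have hl : 0 ≤ 1 - lam := sub_nonneg.2 h1
  have hn0 : n ≠ 0 := hn.ne'
  have hla : ∀ j, 0 ≤ lam * a j := fun j => mul_nonneg h0 (ha j).le
  have key := geom_mean_add_le_geom_mean_add (s := univ) ⟨⟨0, hn⟩, mem_univ _⟩
    (x := fun _ => 1 - lam) (y := fun j => lam * a j) (fun _ _ => hl) (fun j _ => hla j)
  simp only [card_univ, Fintype.card_fin, prod_mul_distrib, prod_const] at key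
  rw [mul_rpow (pow_nonneg h0 n) (prod_nonneg fun j _ => (ha j).le), pow_rpow_inv_natCast h0 hn0,
    pow_rpow_inv_natCast hl hn0, ← one_div] at key
  have hG : 0 ≤ (1 - lam) + lam * (∏ j, a j) ^ ((1 : ℝ) / n) :=
    add_nonneg hl (mul_nonneg h0 (rpow_nonneg (prod_nonneg fun j _ => (ha j).le) _))
  calc (lam * (∏ j, a j) ^ ((1 : ℝ) / n) + (1 - lam)) ^ n
      = ((1 - lam) + lam * (∏ j, a j) ^ ((1 : ℝ) / n)) ^ n := by rw [add_comm]
    _ ≤ ((∏ j, ((1 - lam) + lam * a j)) ^ ((1 : ℝ) / n)) ^ n := pow_le_pow_left₀ hG key n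
    _ = ∏ j, ((1 - lam) + lam * a j) := by
        rw [one_div, rpow_inv_natCast_pow (prod_nonneg fun j _ => add_nonneg hl (hla j)) hn0]
end

section
/- Let n ≥ 2, p > 1 with 2^{n/p} < 2^n/(n+1). Then there exist points P, P_λ in the open cube (0,1)^n and λ ∈ (0,1) such that: P_λ = (1/2,...,1/2) + λ(P − (1/2,...,1/2)) componentwise, f(P) < 2^{n/p}, and f(P_λ) ≥ 2^{n/p}, where f(x_1,...,x_n) = 2^n x_1⋯x_n. -/
/-!
Write `P = (1 + u) / 2`; then `2 ^ n * ∏ P i = ∏ (1 + u i)` and `P_λ` corresponds to `λ • u`.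
Put `k = n - 1` and start on the boundary of the cube at `u = (-a, 1, …, 1)` with
`(1 - a) 2 ^ k = c`. Along the contraction, `φ(λ) = (1 - λ a) (1 + λ) ^ k` has `φ(1) = c` and
`φ'(1) = 2 ^ (k - 1) (k (1 - a) - 2 a)`, which is negative exactly when `c < 2 ^ n / (n + 1)`;
so `φ(λ) > c` for some `λ < 1`. Finally lower the coordinates `1` to some `t < 1`: this makes
`∏ (1 + u i) < c`, and keeps `∏ (1 + λ u i) > c` by continuity.
-/

open Filter Topology Set

lemma HasDerivAt.eventually_nhdsLT_lt_of_neg {f : ℝ → ℝ} {f' x : ℝ} (hf : HasDerivAt f f' x)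
    (hf' : f' < 0) : ∀ᶠ y in 𝓝[<] x, f x < f y := by
  filter_upwards [hf.hasDerivWithinAt.limsup_slope_le' (lt_irrefl x) hf', self_mem_nhdsWithin]
    with y hslope hy
  rw [slope_def_field, div_neg_iff] at hslope
  have : y - x < 0 := sub_neg.2 hy
  rcases hslope with h | h <;> linarith [h.1, h.2]

lemma exists_mem_Ioo_lt_one_sub_mul_mul_one_add_pow {a : ℝ} (k : ℕ) (ha : k * (1 - a) < 2 * a) :
    ∃ lam ∈ Ioo (0 : ℝ) 1, (1 - a) * 2 ^ k < (1 - lam * a) * (1 + lam) ^ k := by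
  have h1 : HasDerivAt (fun lam : ℝ => 1 - lam * a) (-(1 * a)) 1 :=
    ((hasDerivAt_id' 1).mul_const a).const_sub 1
  have h2 : HasDerivAt (fun lam : ℝ => (1 + lam) ^ k) (k * (1 + 1) ^ (k - 1) * 1) 1 :=
    ((hasDerivAt_id' 1).const_add 1).fun_pow k
  have hderiv : HasDerivAt (fun lam : ℝ => (1 - lam * a) * (1 + lam) ^ k)
      (-a * 2 ^ k + (1 - a) * (k * 2 ^ (k - 1))) 1 :=
    (h1.fun_mul h2).congr_deriv (by norm_num [one_add_one_eq_two])
  have hneg : -a * 2 ^ k + (1 - a) * (k * 2 ^ (k - 1)) < 0 := by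
    rcases k with _ | k
    · norm_num at ha ⊢; linarith
    · rw [Nat.add_sub_cancel, pow_succ]
      push_cast at ha ⊢
      nlinarith [mul_lt_mul_of_pos_left ha (pow_pos two_pos k : (0:ℝ) < 2 ^ k)]
  obtain ⟨lam, hlt, hlam⟩ :=
    ((hderiv.eventually_nhdsLT_lt_of_neg hneg).and (Ioo_mem_nhdsLT one_pos)).exists
  exact ⟨lam, hlam, by simpa [one_add_one_eq_two] using hlt⟩

theorem exists_prod_one_add_lt_lt_prod_one_add_mul {k : ℕ} (hk : k ≠ 0) {c : ℝ} (hc0 : 0 < c)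
    (hc : c < 2 ^ (k + 1) / (k + 2)) :
    ∃ u : Fin (k + 1) → ℝ, ∃ lam ∈ Ioo (0 : ℝ) 1, (∀ i, u i ∈ Ioo (-1) 1) ∧
      ∏ i, (1 + u i) < c ∧ c < ∏ i, (1 + lam * u i) := by
  have h2k : (0 : ℝ) < 2 ^ k := by positivity
  obtain ⟨a, hca⟩ : ∃ a : ℝ, (1 - a) * 2 ^ k = c := ⟨1 - c / 2 ^ k, by field_simp; ring⟩
  have hc' : (k + 2) * c < 2 * 2 ^ k := by
    rw [lt_div_iff₀ (by positivity), pow_succ] at hc; linarith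
  have ha : a ∈ Ioo (-1) 1 := by
    constructor <;> nlinarith
  obtain ⟨lam, hlam, hlt⟩ := exists_mem_Ioo_lt_one_sub_mul_mul_one_add_pow k (a := a)
    (by nlinarith)
  have hcont : ContinuousAt (fun t : ℝ => (1 - lam * a) * (1 + lam * t) ^ k) 1 := by fun_prop
  obtain ⟨t, hct, ht⟩ := (((hcont.eventually (lt_mem_nhds (by simpa [hca] using hlt))).filter_mono
    nhdsWithin_le_nhds).and (Ioo_mem_nhdsLT one_pos)).exists
  refine ⟨Fin.cons (-a) fun _ => t, lam, hlam, fun i => ?_, ?_, ?_⟩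
  · refine Fin.cases ?_ (fun _ => ?_) i
    · simpa [and_comm, neg_lt] using ha
    · simpa using ⟨by linarith [ht.1], ht.2⟩
  · simp only [Fin.prod_univ_succ, Fin.cons_zero, Fin.cons_succ, Finset.prod_const,
      Finset.card_univ, Fintype.card_fin, ← sub_eq_add_neg]
    calc (1 - a) * (1 + t) ^ k < (1 - a) * 2 ^ k :=
          mul_lt_mul_of_pos_left
            (pow_lt_pow_left₀ (by linarith [ht.2]) (by linarith [ht.1]) hk) (by linarith [ha.2])
      _ = c := hca
  · simpa [Fin.prod_univ_succ, ← sub_eq_add_neg] using hct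

lemma one_add_div_two_mem_Ioo {x : ℝ} (hx : x ∈ Ioo (-1) 1) : (1 + x) / 2 ∈ Ioo (0 : ℝ) 1 := by
  constructor <;> linarith [hx.1, hx.2]

lemma mul_mem_Ioo_neg_one_one {lam x : ℝ} (hlam : lam ∈ Ioo (0 : ℝ) 1) (hx : x ∈ Ioo (-1) 1) :
    lam * x ∈ Ioo (-1) 1 := by
  obtain ⟨hl0, hl1⟩ := hlam
  obtain ⟨hx0, hx1⟩ := hx
  constructor <;> nlinarith

lemma two_pow_mul_prod_one_add_div_two {n : ℕ} (u : Fin n → ℝ) :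
    2 ^ n * ∏ i, (1 + u i) / 2 = ∏ i, (1 + u i) := by
  rw [Finset.prod_div_distrib, Finset.prod_const, Finset.card_univ, Fintype.card_fin]
  field_simp

theorem stmt_13_general (n : ℕ) (hn : 2 ≤ n) (p : ℝ)
    (h : (2 : ℝ) ^ ((n : ℝ) / p) < 2 ^ n / (n + 1)) :
    ∃ (P Pl : Fin n → ℝ) (lam : ℝ), lam ∈ Set.Ioo (0 : ℝ) 1 ∧
      (∀ i, P i ∈ Set.Ioo (0 : ℝ) 1) ∧ (∀ i, Pl i ∈ Set.Ioo (0 : ℝ) 1) ∧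
      (∀ i, Pl i = 1 / 2 + lam * (P i - 1 / 2)) ∧
      2 ^ n * ∏ i, P i < (2 : ℝ) ^ ((n : ℝ) / p) ∧
      2 ^ n * ∏ i, Pl i ≥ (2 : ℝ) ^ ((n : ℝ) / p) := by
  obtain ⟨k, rfl⟩ : ∃ k, n = k + 1 := ⟨n - 1, by omega⟩
  obtain ⟨u, lam, hlam, hu, hlt, hgt⟩ := exists_prod_one_add_lt_lt_prod_one_add_mul
    (by omega : k ≠ 0) (c := 2 ^ (((k + 1 : ℕ) : ℝ) / p)) (by positivity)
    (h.trans_eq (by push_cast; ring))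
  refine ⟨fun i => (1 + u i) / 2, fun i => (1 + lam * u i) / 2, lam, hlam,
    fun i => one_add_div_two_mem_Ioo (hu i),
    fun i => one_add_div_two_mem_Ioo (mul_mem_Ioo_neg_one_one hlam (hu i)),
    fun i => by ring, ?_, ?_⟩
  · rw [two_pow_mul_prod_one_add_div_two]; exact hlt
  · rw [two_pow_mul_prod_one_add_div_two]; exact hgt.le

theorem stmt_13 (n : ℕ) (hn : 2 ≤ n) (p : ℝ) (hp : 1 < p)
    (h : (2 : ℝ) ^ ((n : ℝ) / p) < 2 ^ n / (n + 1)) :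
    ∃ (P Pl : Fin n → ℝ) (lam : ℝ), lam ∈ Set.Ioo (0 : ℝ) 1 ∧
      (∀ i, P i ∈ Set.Ioo (0 : ℝ) 1) ∧ (∀ i, Pl i ∈ Set.Ioo (0 : ℝ) 1) ∧
      (∀ i, Pl i = 1 / 2 + lam * (P i - 1 / 2)) ∧
      2 ^ n * ∏ i, P i < (2 : ℝ) ^ ((n : ℝ) / p) ∧
      2 ^ n * ∏ i, Pl i ≥ (2 : ℝ) ^ ((n : ℝ) / p) :=
  stmt_13_general n hn p h
end

section
/- Let 0 < x < 1 and 0 ≤ λ ≤ 1. Then for any positive integer n and any t_1, ..., t_n ∈ (0,1), ∏_{i=1}^n (λ·2t_i + (1−λ)) ≥ (λ(∏ 2t_i)^{1/n} + (1−λ))^n ≥ min{1, 2^n ∏ t_i}. -/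
/-!
Writing `d i = λ a i + μ b i`, weighted AM-GM applied to the ratios `a i / d i` and `b i / d i`
gives `λ ∏ (a i / d i) ^ w i + μ ∏ (b i / d i) ^ w i ≤ ∑ w i (λ a i + μ b i) / d i = 1`, which is
the superadditivity of the weighted geometric mean (Mahler's inequality). With `a i = 2 t i`,
`b i = 1`, `μ = 1 - λ` and equal weights `1 / n` this is the first inequality. For the second, with
`G = (∏ 2 t i) ^ (1 / n)` the convex combination `λ G + (1 - λ)` of `G` and `1` is at least
`min 1 G`, and `G ^ n = 2 ^ n ∏ t i`.
-/

open Finset Real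

theorem mul_geom_mean_add_mul_geom_mean_le_weighted {ι : Type*} (s : Finset ι) (w a b : ι → ℝ)
    {lam mu : ℝ} (hlam : 0 ≤ lam) (hmu : 0 ≤ mu) (hw : ∀ i ∈ s, 0 ≤ w i) (hw1 : ∑ i ∈ s, w i = 1)
    (ha : ∀ i ∈ s, 0 ≤ a i) (hb : ∀ i ∈ s, 0 ≤ b i) (hd : ∀ i ∈ s, 0 < lam * a i + mu * b i) :
    lam * ∏ i ∈ s, a i ^ w i + mu * ∏ i ∈ s, b i ^ w i ≤
      ∏ i ∈ s, (lam * a i + mu * b i) ^ w i := by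
  set d : ι → ℝ := fun i => lam * a i + mu * b i
  have hD : 0 < ∏ i ∈ s, d i ^ w i := prod_pos fun i hi => rpow_pos_of_pos (hd i hi) _
  have amgm : ∀ c : ι → ℝ, (∀ i ∈ s, 0 ≤ c i) →
      (∏ i ∈ s, c i ^ w i) / ∏ i ∈ s, d i ^ w i ≤ ∑ i ∈ s, w i * (c i / d i) := by
    intro c hc
    rw [← prod_div_distrib, ← prod_congr rfl fun i hi => div_rpow (hc i hi) (hd i hi).le (w i)]
    exact geom_mean_le_arith_mean_weighted s w _ hw hw1
      fun i hi => div_nonneg (hc i hi) (hd i hi).le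
  have hconv : lam * ∑ i ∈ s, w i * (a i / d i) + mu * ∑ i ∈ s, w i * (b i / d i) = 1 := by
    rw [mul_sum, mul_sum, ← sum_add_distrib, ← hw1]
    refine sum_congr rfl fun i hi => ?_
    have := (hd i hi).ne'
    simp only [d]
    field_simp
  rw [← div_le_one hD]
  calc (lam * ∏ i ∈ s, a i ^ w i + mu * ∏ i ∈ s, b i ^ w i) / ∏ i ∈ s, d i ^ w i
      = lam * ((∏ i ∈ s, a i ^ w i) / ∏ i ∈ s, d i ^ w i)
        + mu * ((∏ i ∈ s, b i ^ w i) / ∏ i ∈ s, d i ^ w i) := by ring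
    _ ≤ lam * ∑ i ∈ s, w i * (a i / d i) + mu * ∑ i ∈ s, w i * (b i / d i) := by
      gcongr
      exacts [amgm a ha, amgm b hb]
    _ = 1 := hconv

theorem mul_prod_root_add_mul_prod_root_pow_card_le {ι : Type*} [Fintype ι] [Nonempty ι]
    (a b : ι → ℝ) {lam mu : ℝ} (hlam : 0 ≤ lam) (hmu : 0 ≤ mu) (ha : ∀ i, 0 ≤ a i)
    (hb : ∀ i, 0 ≤ b i) (hd : ∀ i, 0 < lam * a i + mu * b i) :
    (lam * (∏ i, a i) ^ ((1 : ℝ) / Fintype.card ι) + mu * (∏ i, b i) ^ ((1 : ℝ) / Fintype.card ι))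
        ^ Fintype.card ι ≤ ∏ i, (lam * a i + mu * b i) := by
  set n := Fintype.card ι
  have hn : n ≠ 0 := Fintype.card_ne_zero
  have hw1 : ∑ _i : ι, (1 : ℝ) / n = 1 := by simp [n, hn]
  have key := mul_geom_mean_add_mul_geom_mean_le_weighted univ (fun _ => (1 : ℝ) / n) a b hlam hmu
    (fun _ _ => by positivity) hw1 (fun i _ => ha i) (fun i _ => hb i) (fun i _ => hd i)
  simp only [finsetProd_rpow _ _ (fun i _ => ha i), finsetProd_rpow _ _ (fun i _ => hb i),
    finsetProd_rpow _ _ (fun i _ => (hd i).le)] at key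
  have hlhs : 0 ≤ lam * (∏ i, a i) ^ ((1 : ℝ) / n) + mu * (∏ i, b i) ^ ((1 : ℝ) / n) := by
    have := prod_nonneg fun i (_ : i ∈ univ) => ha i
    have := prod_nonneg fun i (_ : i ∈ univ) => hb i
    positivity
  calc _ ≤ ((∏ i, (lam * a i + mu * b i)) ^ ((1 : ℝ) / n)) ^ n := pow_le_pow_left₀ hlhs key n
    _ = ∏ i, (lam * a i + mu * b i) := by
      rw [one_div, rpow_inv_natCast_pow (prod_nonneg fun i _ => (hd i).le) hn]

theorem min_one_pow_le_convex_comb_pow {x lam : ℝ} (hx : 0 ≤ x) (h0 : 0 ≤ lam) (h1 : lam ≤ 1)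
    (n : ℕ) : min 1 (x ^ n) ≤ (lam * x + (1 - lam)) ^ n := by
  rcases le_total x 1 with h | h
  · exact (min_le_right _ _).trans (pow_le_pow_left₀ hx (by nlinarith) n)
  · exact (min_le_left _ _).trans (one_le_pow₀ (by nlinarith))

theorem stmt_17 (lam : ℝ) (h0 : 0 ≤ lam) (h1 : lam ≤ 1)
    (n : ℕ) (hn : 0 < n) (t : Fin n → ℝ) (ht : ∀ i, t i ∈ Set.Ioo (0 : ℝ) 1) :
    ∏ i, (lam * (2 * t i) + (1 - lam)) ≥
        (lam * (∏ i, 2 * t i) ^ ((1 : ℝ) / n) + (1 - lam)) ^ n ∧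
      (lam * (∏ i, 2 * t i) ^ ((1 : ℝ) / n) + (1 - lam)) ^ n ≥
        min 1 (2 ^ n * ∏ i, t i) := by
  have : Nonempty (Fin n) := ⟨⟨0, hn⟩⟩
  have ht0 : ∀ i, 0 ≤ 2 * t i := fun i => by linarith [(ht i).1]
  -- `(1 - λ) (1 - t i) ≥ 0` gives `λ (2 t i) + (1 - λ) ≥ (1 + λ) t i > 0`
  have hd : ∀ i, 0 < lam * (2 * t i) + (1 - lam) * 1 := fun i => by
    nlinarith [(ht i).1, mul_nonneg h0 (ht i).1.le,
      mul_nonneg (sub_nonneg.2 h1) (sub_nonneg.2 (ht i).2.le)]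
  refine ⟨?_, ?_⟩
  · simpa using mul_prod_root_add_mul_prod_root_pow_card_le (fun i => 2 * t i) 1 h0
      (sub_nonneg.2 h1) ht0 (fun _ => zero_le_one) hd
  · have hG : ((∏ i, 2 * t i) ^ ((1 : ℝ) / n)) ^ n = 2 ^ n * ∏ i, t i := by
      rw [one_div, rpow_inv_natCast_pow (prod_nonneg fun i _ => ht0 i) hn.ne', prod_mul_distrib]
      simp
    rw [← hG]
    exact min_one_pow_le_convex_comb_pow (rpow_nonneg (prod_nonneg fun i _ => ht0 i) _) h0 h1 n
end
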